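/- arXiv:1712.06435 — 5 statements merged into one kernel-verified Lean document; each statement's English description precedes it below -/
import Mathlib

section
/- Let F_q be a finite field and n ≤ q. Given pairs (x_i, y_i) ∈ F_q^k × F_q^k for 1 ≤ i ≤ n such that x_i · y_i ≠ 0 for every i, there exists a linear combination b of the vectors x_1, …, x_n such that b · y_i ≠ 0 for all 1 ≤ i ≤ n. -/
/-!
Add the vectors one at a time. If `b` already has `f i b ≠ 0` for the functionals seen so far
and `f a (x a) ≠ 0`, look at the `|F| + 1` points `b + t • x a` (`t ∈ F`) and `x a` of the
projective line through `b` and `x a`. A functional that does not vanish on both `b` and `x a`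
vanishes at at most one of these points, so the `|F|` functionals cannot kill all of them.
-/

open Matrix Module Submodule

section ProjectiveLine

variable {F V : Type*} [Field F] [AddCommGroup V] [Module F V]

def projectiveLinePoint (u v : V) : Option F → V :=
  fun o => o.elim v fun t => u + t • v

theorem projectiveLinePoint_mem_span (u v : V) (o : Option F) :
    projectiveLinePoint u v o ∈ span F {u, v} := by
  cases o with
  | none => exact subset_span (by simp [projectiveLinePoint])
  | some t =>
    exact add_mem (subset_span (by simp)) (smul_mem _ t (subset_span (by simp)))

theorem subsingleton_setOf_projectiveLinePoint_eq_zero {g : Dual F V} {u v : V}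
    (h : g u ≠ 0 ∨ g v ≠ 0) : {o : Option F | g (projectiveLinePoint u v o) = 0}.Subsingleton := by
  have hg : ∀ o, g (projectiveLinePoint u v o) = o.elim (g v) fun t => g u + t * g v := by
    rintro (_ | t) <;> simp [projectiveLinePoint]
  rintro (_ | s) hs (_ | t) ht <;> simp only [Set.mem_ofPred_eq, hg, Option.elim] at hs ht
  · rfl
  · simp_all
  · simp_all
  · by_cases hv : g v = 0
    · simp_all
    · have : s * g v = t * g v := by linear_combination hs - ht
      rw [mul_right_cancel₀ hv this]

variable [Fintype F]

theorem exists_mem_span_pair_forall_ne_zero {ι : Type*} {s : Finset ι}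
    (hs : s.card ≤ Fintype.card F) {f : ι → Dual F V} {u v : V}
    (h : ∀ i ∈ s, f i u ≠ 0 ∨ f i v ≠ 0) :
    ∃ w ∈ span F {u, v}, ∀ i ∈ s, f i w ≠ 0 := by
  by_contra! hkill
  choose φ hφs hφ using fun o : Option F =>
    hkill _ (projectiveLinePoint_mem_span (F := F) u v o)
  have hinj : Set.InjOn φ (Finset.univ : Finset (Option F)) := fun o₁ _ o₂ _ he =>
    subsingleton_setOf_projectiveLinePoint_eq_zero (h _ (hφs o₂)) (he ▸ hφ o₁) (hφ o₂)
  have := Finset.card_le_card_of_injOn φ (fun o _ => hφs o) hinj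
  simp only [Finset.card_univ, Fintype.card_option] at this
  omega

theorem exists_mem_span_image_forall_ne_zero {ι : Type*} (f : ι → Dual F V) (x : ι → V)
    (hx : ∀ i, f i (x i) ≠ 0) (s : Finset ι) (hs : s.card ≤ Fintype.card F) :
    ∃ b ∈ span F (x '' s), ∀ i ∈ s, f i b ≠ 0 := by
  classical
  induction s using Finset.induction_on with
  | empty => exact ⟨0, zero_mem _, by simp⟩
  | insert a s ha ih =>
    rw [Finset.card_insert_of_notMem ha] at hs
    obtain ⟨b, hb, hbs⟩ := ih (by omega)
    obtain ⟨w, hw, hws⟩ := exists_mem_span_pair_forall_ne_zero (s := insert a s) (f := f)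
      (u := b) (v := x a) (by rw [Finset.card_insert_of_notMem ha]; omega) (by
        simp only [Finset.mem_insert, forall_eq_or_imp]
        exact ⟨Or.inr (hx a), fun i hi => Or.inl (hbs i hi)⟩)
    refine ⟨w, span_le.mpr ?_ hw, hws⟩
    rintro _ (rfl | rfl)
    · exact span_mono (Set.image_mono (by simp)) hb
    · exact subset_span ⟨a, by simp⟩

end ProjectiveLine

/-- Lemma (Jaggi et al.): over a finite field `F` with `n ≤ |F|`, given pairs
`(xᵢ, yᵢ)` of vectors in `Fᵏ` with `xᵢ · yᵢ ≠ 0` for all `i`, there is a linear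
combination `b = Σ αⱼ xⱼ` with `b · yᵢ ≠ 0` for all `i`. -/
theorem exists_linear_combination_nonzero_dot {F : Type*} [Field F] [Fintype F]
    {k n : ℕ} (hn : n ≤ Fintype.card F)
    (x y : Fin n → (Fin k → F)) (h : ∀ i, x i ⬝ᵥ y i ≠ 0) :
    ∃ α : Fin n → F, ∀ i, (∑ j, α j • x j) ⬝ᵥ y i ≠ 0 := by
  let f : Fin n → Dual F (Fin k → F) := fun i => (dotProductBilin F F).flip (y i)
  obtain ⟨b, hb, hby⟩ := exists_mem_span_image_forall_ne_zero f x h Finset.univ (by simpa)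
  rw [Finset.coe_univ, Set.image_univ, mem_span_range_iff_exists_fun] at hb
  obtain ⟨α, rfl⟩ := hb
  exact ⟨α, fun i => hby i (Finset.mem_univ i)⟩
end

section
/- Let D=(V,A) be a directed acyclic graph with source s and f: A → {0,…,k}. If g and g' are both fan-extensions of f, then the pointwise maximum of g and g' is also a fan-extension of f. Consequently, if f admits any fan-extension, it admits a unique maximal fan-extension g* with g*(v) ≥ g(v) for every fan-extension g and every node v. -/
/-!
A family of paths is a fan w.r.t. `g` only through the bounds `f ≤ g` on its first arcs, so a
fan w.r.t. `g` stays one w.r.t. every `h ≥ g`. Hence `h` is a fan-extension as soon as each of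
its values `h v` is attained by some fan-extension `g ≤ h`. The pointwise maximum of two
fan-extensions is of this form, and so is the pointwise supremum of all of them, which is finite
because the size of a fan is bounded by the largest arc label.
-/

/-- A non-trivial monotone path (w.r.t. the arc labelling `f`). -/
def IsMonoPath {V : Type*} (A : Finset (V × V)) (f : V × V → ℕ)
    (l : List (V × V)) : Prop :=
  l ≠ [] ∧ (∀ a ∈ l, a ∈ A) ∧ l.Chain' (fun a b => a.2 = b.1 ∧ f a ≤ f b)

/-- An `i`-fan of `v` w.r.t. `f` and `g`. -/
def IsFan {V : Type*} (A : Finset (V × V)) (f : V × V → ℕ) (g : V → ℕ)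
    (i : ℕ) (v : V) (P : Fin i → List (V × V)) : Prop :=
  (∀ j, IsMonoPath A f (P j)) ∧
  (∀ j, (P j).getLast?.map Prod.snd = some v) ∧
  (∀ j j', j ≠ j' → ∀ a ∈ P j, a ∉ P j') ∧
  (∀ j, ∀ a ∈ (P j).head?, (j : ℕ) + 1 ≤ f a ∧ f a ≤ g a.1) ∧
  (∀ j, ∀ a ∈ (P j).getLast?, f a ≤ i)

/-- `g` is a fan-extension of `f`: every node `v` with `g(v) > 0` has a `g(v)`-fan,
and every arc `vw` is either free (`f(vw) ≤ g(v)`) or has an entering arc `uv`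
with `f(uv) = f(vw)`. -/
def IsFanExt {V : Type*} (A : Finset (V × V)) (f : V × V → ℕ) (g : V → ℕ) : Prop :=
  (∀ v, 0 < g v → ∃ P : Fin (g v) → List (V × V), IsFan A f g (g v) v P) ∧
  (∀ a ∈ A, f a ≤ g a.1 ∨ ∃ b ∈ A, b.2 = a.1 ∧ f b = f a)

section

variable {V : Type*} {A : Finset (V × V)} {f : V × V → ℕ}

theorem IsFan.mono {g h : V → ℕ} (hgh : g ≤ h) {i : ℕ} {v : V} {P : Fin i → List (V × V)}
    (hP : IsFan A f g i v P) : IsFan A f h i v P := by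
  obtain ⟨hmono, hlast, hdisj, hhead, hbound⟩ := hP
  exact ⟨hmono, hlast, hdisj, fun j a ha => ⟨(hhead j a ha).1, (hhead j a ha).2.trans (hgh _)⟩,
    hbound⟩

/-- The `i`-th path of an `i`-fan starts with an arc of label at least `i`. -/
theorem IsFan.le_of_forall_le {g : V → ℕ} {i : ℕ} {v : V} {P : Fin i → List (V × V)}
    (hP : IsFan A f g i v P) {k : ℕ} (hfk : ∀ a ∈ A, f a ≤ k) : i ≤ k := by
  obtain _ | i := i
  · exact Nat.zero_le k
  have hne : P (Fin.last i) ≠ [] := (hP.1 _).1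
  have hA : (P (Fin.last i)).head hne ∈ A := (hP.1 _).2.1 _ (List.head_mem hne)
  have hlabel := (hP.2.2.2.1 (Fin.last i) _ (List.head?_eq_some_head hne)).1
  simp only [Fin.val_last] at hlabel
  exact hlabel.trans (hfk _ hA)

theorem IsFanExt.le_of_forall_le {g : V → ℕ} (hg : IsFanExt A f g) {k : ℕ}
    (hfk : ∀ a ∈ A, f a ≤ k) (v : V) : g v ≤ k := by
  rcases Nat.eq_zero_or_pos (g v) with hv | hv
  · exact hv ▸ Nat.zero_le k
  · obtain ⟨P, hP⟩ := hg.1 v hv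
    exact hP.le_of_forall_le hfk

theorem IsFanExt.of_forall_exists {h : V → ℕ}
    (H : ∀ v, ∃ g, IsFanExt A f g ∧ g ≤ h ∧ g v = h v) : IsFanExt A f h := by
  refine ⟨fun v hv => ?_, fun a ha => ?_⟩
  · obtain ⟨g, hg, hgh, hgv⟩ := H v
    obtain ⟨P, hP⟩ := hg.1 v (hgv ▸ hv)
    rw [← hgv]
    exact ⟨P, hP.mono hgh⟩
  · obtain ⟨g, hg, -, hgv⟩ := H a.1
    exact hgv ▸ hg.2 a ha

theorem IsFanExt.max {g g' : V → ℕ} (hg : IsFanExt A f g) (hg' : IsFanExt A f g') :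
    IsFanExt A f (fun v => max (g v) (g' v)) := by
  refine IsFanExt.of_forall_exists fun v => ?_
  rcases le_total (g' v) (g v) with hle | hle
  · exact ⟨g, hg, fun _ => le_max_left _ _, (max_eq_left hle).symm⟩
  · exact ⟨g', hg', fun _ => le_max_right _ _, (max_eq_right hle).symm⟩

theorem exists_isFanExt_forall_le {g : V → ℕ} (hg : IsFanExt A f g) {k : ℕ}
    (hfk : ∀ a ∈ A, f a ≤ k) :
    ∃ gmax : V → ℕ, IsFanExt A f gmax ∧ ∀ h : V → ℕ, IsFanExt A f h → h ≤ gmax := by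
  let values (v : V) : Set ℕ := {n | ∃ h, IsFanExt A f h ∧ h v = n}
  have hbdd (v : V) : BddAbove (values v) := ⟨k, by
    rintro _ ⟨h, hh, rfl⟩
    exact hh.le_of_forall_le hfk v⟩
  have hle (h : V → ℕ) (hh : IsFanExt A f h) : h ≤ fun v => sSup (values v) :=
    fun v => le_csSup (hbdd v) ⟨h, hh, rfl⟩
  refine ⟨fun v => sSup (values v), IsFanExt.of_forall_exists fun v => ?_, hle⟩
  obtain ⟨h, hh, hv⟩ := Nat.sSup_mem (s := values v) ⟨g v, g, hg, rfl⟩ (hbdd v)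
  exact ⟨h, hh, hle h hh, hv⟩

end

theorem max_fanExt_general {V : Type*}
    (A : Finset (V × V)) (f : V × V → ℕ) (k : ℕ)
    (hfk : ∀ a ∈ A, f a ≤ k)
    (g g' : V → ℕ)
    (hg : IsFanExt A f g) (hg' : IsFanExt A f g') :
    IsFanExt A f (fun v => max (g v) (g' v)) ∧
    ∃ gmax : V → ℕ, IsFanExt A f gmax ∧
      ∀ h : V → ℕ, IsFanExt A f h → ∀ v, h v ≤ gmax v :=
  ⟨hg.max hg', exists_isFanExt_forall_le hg hfk⟩

/-- If `g` and `g'` are fan-extensions of `f`, so is their pointwise maximum;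
consequently (as `f` admits a fan-extension) `f` admits a unique maximal
fan-extension `g*` with `g*(v) ≥ g(v)` for every fan-extension `g` and node `v`. -/
theorem max_fanExt {V : Type*} [Fintype V] [DecidableEq V]
    (A : Finset (V × V)) (f : V × V → ℕ) (k : ℕ)
    (ord : V → ℕ) (hord : ∀ a ∈ A, ord a.1 < ord a.2)
    (hfk : ∀ a ∈ A, f a ≤ k)
    (g g' : V → ℕ) (hgk : ∀ v, g v ≤ k) (hg'k : ∀ v, g' v ≤ k)
    (hg : IsFanExt A f g) (hg' : IsFanExt A f g') :
    IsFanExt A f (fun v => max (g v) (g' v)) ∧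
    ∃ gmax : V → ℕ, IsFanExt A f gmax ∧
      ∀ h : V → ℕ, IsFanExt A f h → ∀ v, h v ≤ gmax v :=
  max_fanExt_general A f k hfk g g' hg hg'
end

section
/- Let D=(V,A) be a directed acyclic graph with single source s where every node is reachable from s, and let T ⊆ V∖{s}. The inclusion-wise maximal 1-sets (sets X with s ∉ X, ϱ(X)=1) that contain at least one node of T are pairwise disjoint, and consequently their arc-neighborhoods I(Z_i) (arcs with head or tail in Z_i) are pairwise disjoint. -/
/-- Number of arcs of `A` entering the vertex set `X`. -/
def inDeg {V : Type*} [DecidableEq V] (A : Finset (V × V)) (X : Finset V) : ℕ :=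
  (A.filter (fun a => a.1 ∉ X ∧ a.2 ∈ X)).card

/-- A directed `u→v` path. -/
def IsPath {V : Type*} (A : Finset (V × V)) (u v : V) (l : List (V × V)) : Prop :=
  l ≠ [] ∧ (∀ a ∈ l, a ∈ A) ∧ l.head?.map Prod.fst = some u ∧
    l.getLast?.map Prod.snd = some v ∧ l.Chain' (fun a b => a.2 = b.1)

/-- `v` is reachable from `s` using arcs of `A`. -/
def Reach {V : Type*} (A : Finset (V × V)) (s v : V) : Prop :=
  s = v ∨ ∃ l, IsPath A s v l

/-- `X` is an inclusion-wise maximal `1`-set: `s ∉ X`, `ϱ(X) = 1`, and `X` is not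
properly contained in any other such set. -/
def IsMaxOneSet {V : Type*} [DecidableEq V] (A : Finset (V × V)) (s : V)
    (X : Finset V) : Prop :=
  s ∉ X ∧ inDeg A X = 1 ∧
    ∀ Y : Finset V, s ∉ Y → inDeg A Y = 1 → X ⊆ Y → X = Y

/-- `I(Z)`: the arcs with head or tail in `Z`. -/
def arcNbhd {V : Type*} [DecidableEq V] (A : Finset (V × V)) (Z : Finset V) :
    Finset (V × V) :=
  A.filter (fun a => a.1 ∈ Z ∨ a.2 ∈ Z)

/-!
If two maximal `1`-sets `X ≠ Y` met, or were joined by an arc, then `X ∪ Y` would again be a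
`1`-set: it is entered by at least one arc because every vertex is reachable from `s`, and by at
most one because of the submodularity of `ϱ` (respectively, because the arc entering `Y` from
`X` no longer enters `X ∪ Y`). Maximality then forces `X = X ∪ Y = Y`.
-/

section

variable {V : Type*}

theorem IsPath.exists_arc_entering [DecidableEq V] {A : Finset (V × V)} {X : Finset V}
    {u v : V} {l : List (V × V)} (hl : IsPath A u v l) (hu : u ∉ X) (hv : v ∈ X) :
    ∃ a ∈ A, a.1 ∉ X ∧ a.2 ∈ X := by
  induction l generalizing u with
  | nil => exact absurd rfl hl.1
  | cons a tl ih =>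
    obtain ⟨-, hA, hhead, hlast, hchain⟩ := hl
    have hau : a.1 = u := by simpa using hhead
    by_cases ha : a.2 ∈ X
    · exact ⟨a, hA a List.mem_cons_self, hau ▸ hu, ha⟩
    cases tl with
    | nil =>
      have hav : a.2 = v := by simpa using hlast
      exact absurd (hav ▸ hv) ha
    | cons b tl =>
      have hab : a.2 = b.1 := (List.isChain_cons_cons.mp hchain).1
      refine ih ⟨List.cons_ne_nil _ _, fun c hc => hA c (List.mem_cons_of_mem _ hc),
        by simp [hab], by simpa using hlast, (List.isChain_cons_cons.mp hchain).2⟩ ha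

namespace inDeg

variable [DecidableEq V] (A : Finset (V × V))

theorem pos_of_reach {s v : V} {X : Finset V} (hreach : Reach A s v) (hs : s ∉ X)
    (hv : v ∈ X) : 0 < inDeg A X := by
  rcases hreach with rfl | ⟨l, hl⟩
  · exact absurd hv hs
  · obtain ⟨a, ha, ha₁, ha₂⟩ := hl.exists_arc_entering hs hv
    exact Finset.card_pos.2 ⟨a, Finset.mem_filter.2 ⟨ha, ha₁, ha₂⟩⟩

theorem union_add_inter_le (X Y : Finset V) :
    inDeg A (X ∪ Y) + inDeg A (X ∩ Y) ≤ inDeg A X + inDeg A Y := by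
  unfold inDeg
  rw [← Finset.card_union_add_card_inter (A.filter _), ← Finset.card_union_add_card_inter
    (A.filter fun a => a.1 ∉ X ∧ a.2 ∈ X)]
  apply Nat.add_le_add <;> apply Finset.card_le_card <;> intro a <;>
    simp only [Finset.mem_union, Finset.mem_inter, Finset.mem_filter] <;> tauto

theorem union_lt_add {X Y : Finset V} {a : V × V} (ha : a ∈ A) (ha₁ : a.1 ∈ X)
    (ha₁' : a.1 ∉ Y) (ha₂ : a.2 ∈ Y) : inDeg A (X ∪ Y) < inDeg A X + inDeg A Y := by
  unfold inDeg
  refine lt_of_lt_of_le (Finset.card_lt_card ?_) (Finset.card_union_le _ _)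
  refine Finset.ssubset_iff_of_subset ?_ |>.2 ⟨a, ?_, ?_⟩
  · intro b
    simp only [Finset.mem_union, Finset.mem_filter]
    tauto
  · simp [ha, ha₁', ha₂]
  · simp [ha₁]

end inDeg

namespace IsMaxOneSet

variable [DecidableEq V] {A : Finset (V × V)} {s : V} {X Y : Finset V}

theorem eq_of_inDeg_union (hX : IsMaxOneSet A s X) (hY : IsMaxOneSet A s Y)
    (hXY : inDeg A (X ∪ Y) = 1) : X = Y := by
  have hs : s ∉ X ∪ Y := by simp [hX.1, hY.1]
  exact (hX.2.2 _ hs hXY Finset.subset_union_left).trans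
    (hY.2.2 _ hs hXY Finset.subset_union_right).symm

theorem eq_of_mem_of_mem (hX : IsMaxOneSet A s X) (hY : IsMaxOneSet A s Y) {v : V}
    (hv : Reach A s v) (hvX : v ∈ X) (hvY : v ∈ Y) : X = Y := by
  have hinter := inDeg.pos_of_reach A hv (fun h => hX.1 (Finset.mem_inter.1 h).1)
    (Finset.mem_inter.2 ⟨hvX, hvY⟩)
  have hunion := inDeg.pos_of_reach A hv (by simp [hX.1, hY.1])
    (Finset.mem_union_left Y hvX)
  have := inDeg.union_add_inter_le A X Y
  exact hX.eq_of_inDeg_union hY (by have := hX.2.1; have := hY.2.1; omega)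

theorem eq_of_arc (hreach : ∀ v, Reach A s v) (hX : IsMaxOneSet A s X)
    (hY : IsMaxOneSet A s Y) {a : V × V} (ha : a ∈ A) (ha₁ : a.1 ∈ X) (ha₂ : a.2 ∈ Y) : X = Y := by
  by_cases ha₁' : a.1 ∈ Y
  · exact hX.eq_of_mem_of_mem hY (hreach a.1) ha₁ ha₁'
  have hunion := inDeg.pos_of_reach A (hreach a.2) (by simp [hX.1, hY.1])
    (Finset.mem_union_right X ha₂)
  have := inDeg.union_lt_add A ha ha₁ ha₁' ha₂
  exact hX.eq_of_inDeg_union hY (by have := hX.2.1; have := hY.2.1; omega)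

end IsMaxOneSet

end

theorem maxOneSets_pairwise_disjoint_general {V : Type*} [DecidableEq V]
    (A : Finset (V × V)) (s : V)
    (hreach : ∀ v : V, Reach A s v)
    (Z₁ Z₂ : Finset V) (h1 : IsMaxOneSet A s Z₁) (h2 : IsMaxOneSet A s Z₂)
    (hne : Z₁ ≠ Z₂) :
    Disjoint Z₁ Z₂ ∧ Disjoint (arcNbhd A Z₁) (arcNbhd A Z₂) := by
  have hZ : Disjoint Z₁ Z₂ := Finset.disjoint_left.2 fun _ hv₁ hv₂ =>
    hne (h1.eq_of_mem_of_mem h2 (hreach _) hv₁ hv₂)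
  refine ⟨hZ, Finset.disjoint_left.2 fun a ha₁ ha₂ => ?_⟩
  simp only [arcNbhd, Finset.mem_filter] at ha₁ ha₂
  obtain ⟨ha, hends⟩ := ha₁
  rcases hends with h | h <;> rcases ha₂.2 with h' | h'
  · exact Finset.disjoint_left.1 hZ h h'
  · exact hne (h1.eq_of_arc hreach h2 ha h h')
  · exact hne (h2.eq_of_arc hreach h1 ha h' h).symm
  · exact Finset.disjoint_left.1 hZ h h'

/-- In a DAG with single source `s` from which every node is reachable, the
maximal `1`-sets containing a node of `T` are pairwise disjoint, and so are
their arc-neighborhoods `I(Z₁)`, `I(Z₂)`. -/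
theorem maxOneSets_pairwise_disjoint {V : Type*} [DecidableEq V]
    (A : Finset (V × V)) (s : V) (T : Finset V) (hsT : s ∉ T)
    (ord : V → ℕ) (hord : ∀ a ∈ A, ord a.1 < ord a.2)
    (hreach : ∀ v : V, Reach A s v)
    (Z₁ Z₂ : Finset V) (h1 : IsMaxOneSet A s Z₁) (h2 : IsMaxOneSet A s Z₂)
    (ht1 : ∃ t ∈ T, t ∈ Z₁) (ht2 : ∃ t ∈ T, t ∈ Z₂) (hne : Z₁ ≠ Z₂) :
    Disjoint Z₁ Z₂ ∧ Disjoint (arcNbhd A Z₁) (arcNbhd A Z₂) :=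
  maxOneSets_pairwise_disjoint_general A s hreach Z₁ Z₂ h1 h2 hne
end

section
/- Let D=(V,A) be a directed acyclic graph with single source s, T ⊆ V∖{s} a set of receivers with λ(s,t) ≥ 1 for all t ∈ T. Let Z be the set of nodes not reachable from s after deleting all arcs incident to the maximal 1-sets containing receivers. Define f: A → {1,2} by f(a)=1 if a is incident to Z (head or tail in Z) and f(a)=2 otherwise. Then f satisfies: (1) every 2-valued arc uv with u ≠ s has a 2-valued arc entering u; (2) every 1-valued arc uv with u ≠ s either has a 1-valued arc entering u or λ(s,u) ≥ 2. -/
attribute [local instance] Classical.propDecidable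

/-- `lam A s v`: by Menger's theorem, the maximum number of arc-disjoint `s→v`
paths equals the minimum in-degree of a set containing `v` and avoiding `s`. -/
noncomputable def lam {V : Type*} [DecidableEq V] (A : Finset (V × V)) (s v : V) : ℕ :=
  sInf {n | ∃ X : Finset V, s ∉ X ∧ v ∈ X ∧ inDeg A X = n}

/-! A vertex `u ∉ Z` with an arc `uv` into `Z` can only lose reachability to `v` because `v` lies
in one of the maximal `1`-sets `Zᵢ`, whose unique entering arc is then `uv`. If some set `X ∌ s`
containing `u` had in-degree `≤ 1`, every arc entering `X ∪ Zᵢ` would enter `X`, so `X ∪ Zᵢ`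
would be a `1`-set (it is entered at all since `u` is reachable) strictly containing `Zᵢ`. Hence
`λ(s,u) ≥ 2`. -/

open Relation

section Reach

variable {V : Type*} {A : Finset (V × V)} {s u : V}

lemma IsPath.cons {l : List (V × V)} {a : V × V} {v : V} (ha : a ∈ A)
    (hl : IsPath A a.2 v l) : IsPath A a.1 v (a :: l) := by
  obtain ⟨hne, hmem, hhead, hlast, hchain⟩ := hl
  obtain ⟨c, t, rfl⟩ := List.exists_cons_of_ne_nil hne
  refine ⟨List.cons_ne_nil _ _, ?_, rfl, by simpa [List.getLast?_cons_cons] using hlast, ?_⟩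
  · simpa [ha] using hmem
  · exact List.isChain_cons_cons.mpr ⟨by simpa [eq_comm] using hhead, hchain⟩

lemma IsPath.reflTransGen : ∀ {l : List (V × V)} {u v : V}, IsPath A u v l →
    ReflTransGen (fun x y => (x, y) ∈ A) u v
  | [], _, _, h => absurd rfl h.1
  | [a], _, _, ⟨_, hmem, hhead, hlast, _⟩ => by
    simp only [List.head?_cons, List.getLast?_singleton, Option.map_some, Option.some.injEq]
      at hhead hlast
    subst hhead hlast
    exact .single (hmem a (List.mem_singleton_self a))
  | a :: c :: t, _, _, ⟨_, hmem, hhead, hlast, hchain⟩ => by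
    obtain ⟨hac, hchain⟩ := List.isChain_cons_cons.mp hchain
    have htail : IsPath A a.2 _ (c :: t) :=
      ⟨List.cons_ne_nil _ _, fun x hx => hmem x (List.mem_cons_of_mem _ hx), by simp [hac],
        by simpa [List.getLast?_cons_cons] using hlast, hchain⟩
    simp only [List.head?_cons, Option.map_some, Option.some.injEq] at hhead
    exact hhead ▸ .head (hmem a List.mem_cons_self) htail.reflTransGen

theorem reach_iff_reflTransGen {v : V} :
    Reach A s v ↔ ReflTransGen (fun x y => (x, y) ∈ A) s v := by
  refine ⟨?_, fun h => ?_⟩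
  · rintro (rfl | ⟨l, hl⟩)
    exacts [.refl, hl.reflTransGen]
  · induction h using ReflTransGen.head_induction_on with
    | refl => exact .inl rfl
    | head hxy _ ih =>
      rcases ih with rfl | ⟨l, hl⟩
      · exact .inr ⟨_, List.cons_ne_nil _ [], by simpa using hxy, rfl, rfl,
          List.isChain_singleton _⟩
      · exact .inr ⟨_, IsPath.cons (a := (_, _)) hxy hl⟩

lemma Reach.snoc {a : V × V} (h : Reach A s a.1) (ha : a ∈ A) : Reach A s a.2 :=
  reach_iff_reflTransGen.mpr ((reach_iff_reflTransGen.mp h).tail ha)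

lemma Reach.exists_arc_into (h : Reach A s u) (hu : u ≠ s) :
    ∃ b ∈ A, b.2 = u ∧ Reach A s b.1 := by
  rcases (reach_iff_reflTransGen.mp h).cases_tail with rfl | ⟨c, hsc, hcu⟩
  exacts [absurd rfl hu, ⟨(c, u), hcu, rfl, reach_iff_reflTransGen.mpr hsc⟩]

lemma Reach.exists_arc_entering [DecidableEq V] {X : Finset V} (h : Reach A s u)
    (hs : s ∉ X) (hu : u ∈ X) : ∃ b ∈ A, b.1 ∉ X ∧ b.2 ∈ X := by
  induction reach_iff_reflTransGen.mp h with
  | refl => exact absurd hu hs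
  | @tail x y hsx hxy ih =>
    by_cases hx : x ∈ X
    exacts [ih (reach_iff_reflTransGen.mpr hsx) hx, ⟨(x, y), hxy, hx, hu⟩]

end Reach

section InDeg

variable {V : Type*} [DecidableEq V] {A : Finset (V × V)} {s u : V} {X Y : Finset V}

lemma inDeg_pos_of_reach (h : Reach A s u) (hs : s ∉ X) (hu : u ∈ X) : 0 < inDeg A X := by
  obtain ⟨b, hb, hb1, hb2⟩ := h.exists_arc_entering hs hu
  exact Finset.card_pos.mpr ⟨b, Finset.mem_filter.mpr ⟨hb, hb1, hb2⟩⟩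

lemma eq_of_inDeg_eq_one (hX : inDeg A X = 1) {a b : V × V}
    (ha : a ∈ A) (ha1 : a.1 ∉ X) (ha2 : a.2 ∈ X)
    (hb : b ∈ A) (hb1 : b.1 ∉ X) (hb2 : b.2 ∈ X) : b = a :=
  Finset.card_le_one.mp hX.le b (Finset.mem_filter.mpr ⟨hb, hb1, hb2⟩) a
    (Finset.mem_filter.mpr ⟨ha, ha1, ha2⟩)

lemma inDeg_union_le (h : ∀ b ∈ A, b.1 ∉ Y → b.2 ∈ Y → b.1 ∈ X) :
    inDeg A (X ∪ Y) ≤ inDeg A X := by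
  refine Finset.card_le_card fun b hb => ?_
  simp only [Finset.mem_filter, Finset.mem_union, not_or] at hb ⊢
  obtain ⟨hbA, ⟨hb1X, hb1Y⟩, hb2X | hb2Y⟩ := hb
  exacts [⟨hbA, hb1X, hb2X⟩, absurd (h b hbA hb1Y hb2Y) hb1X]

lemma le_lam {n : ℕ} (hu : u ≠ s) (h : ∀ X : Finset V, s ∉ X → u ∈ X → n ≤ inDeg A X) :
    n ≤ lam A s u := by
  refine le_csInf ⟨_, {u}, by simpa [eq_comm] using hu, Finset.mem_singleton_self u, rfl⟩ ?_
  rintro _ ⟨X, hsX, huX, rfl⟩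
  exact h X hsX huX

theorem two_le_lam_of_arc_into_isMaxOneSet (hX : IsMaxOneSet A s X) {a : V × V} (ha : a ∈ A)
    (ha1 : a.1 ∉ X) (ha2 : a.2 ∈ X) (hs : a.1 ≠ s) (hr : Reach A s a.1) :
    2 ≤ lam A s a.1 := by
  obtain ⟨hsX, hdeg, hmax⟩ := hX
  refine le_lam hs fun Y hsY haY => ?_
  by_contra! hY
  have hsXY : s ∉ Y ∪ X := by simp [hsY, hsX]
  have hle : inDeg A (Y ∪ X) ≤ inDeg A Y := inDeg_union_le fun b hb hb1 hb2 =>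
    eq_of_inDeg_eq_one hdeg ha ha1 ha2 hb hb1 hb2 ▸ haY
  have hpos := inDeg_pos_of_reach hr hsXY (Finset.mem_union_left X haY)
  have hXY : X = Y ∪ X := hmax _ hsXY (by omega) Finset.subset_union_right
  exact ha1 (hXY ▸ Finset.mem_union_left X haY)

end InDeg

section HeightFunction

variable {V : Type*} [Fintype V] [DecidableEq V] {A : Finset (V × V)} {s : V}

def arcsAvoiding (A : Finset (V × V)) (U : Finset V) : Finset (V × V) :=
  A.filter (fun a => a.1 ∉ U ∧ a.2 ∉ U)

noncomputable def unreachable (A : Finset (V × V)) (s : V) : Finset V :=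
  Finset.univ.filter (fun v => ¬ Reach A s v)

def heightFn (Z : Finset V) (a : V × V) : ℕ :=
  if a.1 ∈ Z ∨ a.2 ∈ Z then 1 else 2

omit [DecidableEq V] in
lemma mem_unreachable {v : V} : v ∈ unreachable A s ↔ ¬ Reach A s v := by
  simp [unreachable]

omit [DecidableEq V] in
lemma notMem_unreachable {v : V} : v ∉ unreachable A s ↔ Reach A s v :=
  mem_unreachable.not.trans not_not

lemma subset_unreachable_arcsAvoiding {U : Finset V} (hs : s ∉ U) :
    U ⊆ unreachable (arcsAvoiding A U) s := by
  intro w hw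
  rw [mem_unreachable]
  intro hr
  have hws : w ≠ s := by rintro rfl; exact hs hw
  obtain ⟨b, hb, rfl, -⟩ := hr.exists_arc_into hws
  exact (Finset.mem_filter.mp hb).2.2 hw

lemma exists_arc_into_heightFn_eq_two {A' : Finset (V × V)} (hA' : A' ⊆ A) {a : V × V}
    (has : a.1 ≠ s) (hfa : heightFn (unreachable A' s) a = 2) :
    ∃ b ∈ A, b.2 = a.1 ∧ heightFn (unreachable A' s) b = 2 := by
  have ha1 : a.1 ∉ unreachable A' s := by
    intro h
    simp [heightFn, h] at hfa
  obtain ⟨b, hb, hba, hr⟩ := (notMem_unreachable.mp ha1).exists_arc_into has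
  refine ⟨b, hA' hb, hba, if_neg ?_⟩
  rintro (hb1 | hb2)
  exacts [mem_unreachable.mp hb1 hr, ha1 (hba ▸ hb2)]

lemma exists_arc_into_heightFn_eq_one_or_two_le_lam {U : Finset V}
    (hU : ∀ v ∈ U, ∃ X, IsMaxOneSet A s X ∧ v ∈ X ∧ X ⊆ U) (hreach : ∀ v, Reach A s v)
    {a : V × V} (ha : a ∈ A) (has : a.1 ≠ s)
    (hfa : heightFn (unreachable (arcsAvoiding A U) s) a = 1) :
    (∃ b ∈ A, b.2 = a.1 ∧ heightFn (unreachable (arcsAvoiding A U) s) b = 1) ∨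
      2 ≤ lam A s a.1 := by
  set Z := unreachable (arcsAvoiding A U) s
  have hsU : s ∉ U := fun hs => by
    obtain ⟨X, hX, hsX, -⟩ := hU s hs
    exact hX.1 hsX
  have hUZ : U ⊆ Z := subset_unreachable_arcsAvoiding hsU
  by_cases ha1 : a.1 ∈ Z
  · obtain ⟨b, hb, hba, -⟩ := (hreach a.1).exists_arc_into has
    exact .inl ⟨b, hb, hba, if_pos (.inr (hba ▸ ha1))⟩
  have ha2 : a.2 ∈ Z := by
    by_contra ha2
    simp [heightFn, ha1, ha2] at hfa
  have haU : a.2 ∈ U := by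
    by_contra haU
    have ha' : a ∈ arcsAvoiding A U := Finset.mem_filter.mpr ⟨ha, fun h => ha1 (hUZ h), haU⟩
    exact mem_unreachable.mp ha2 ((notMem_unreachable.mp ha1).snoc ha')
  obtain ⟨X, hX, haX, hXU⟩ := hU a.2 haU
  exact .inr (two_le_lam_of_arc_into_isMaxOneSet hX ha (fun h => ha1 (hUZ (hXU h))) haX has
    (hreach a.1))

end HeightFunction

theorem two_layer_height_function_valid_general {V : Type*} [Fintype V] [DecidableEq V]
    (A : Finset (V × V)) (s : V) (T : Finset V)
    (hreach : ∀ v : V, Reach A s v) :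
    let ZU : Finset V := Finset.univ.filter (fun v =>
      ∃ X : Finset V, IsMaxOneSet A s X ∧ (∃ t ∈ T, t ∈ X) ∧ v ∈ X)
    let A' : Finset (V × V) := A.filter (fun a => a.1 ∉ ZU ∧ a.2 ∉ ZU)
    let Z : Finset V := Finset.univ.filter (fun v => ¬ Reach A' s v)
    let f : V × V → ℕ := fun a => if a.1 ∈ Z ∨ a.2 ∈ Z then 1 else 2
    (∀ a ∈ A, a.1 ≠ s → f a = 2 → ∃ b ∈ A, b.2 = a.1 ∧ f b = 2) ∧
    (∀ a ∈ A, a.1 ≠ s → f a = 1 →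
      (∃ b ∈ A, b.2 = a.1 ∧ f b = 1) ∨ 2 ≤ lam A s a.1) := by
  intro ZU A' Z f
  have hZU : ∀ v ∈ ZU, ∃ X, IsMaxOneSet A s X ∧ v ∈ X ∧ X ⊆ ZU := by
    intro v hv
    obtain ⟨X, hX, hT, hvX⟩ := (Finset.mem_filter.mp hv).2
    exact ⟨X, hX, hvX, fun w hw => Finset.mem_filter.mpr ⟨Finset.mem_univ w, X, hX, hT, hw⟩⟩
  exact ⟨fun _ _ has hfa => exists_arc_into_heightFn_eq_two (Finset.filter_subset _ A) has hfa,
    fun _ ha has hfa => exists_arc_into_heightFn_eq_one_or_two_le_lam hZU hreach ha has hfa⟩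

/-- The construction of a feasible height function for two layers:
`ZU` is the union of the maximal `1`-sets containing receivers, `A'` is obtained
from `A` by deleting all arcs incident to `ZU`, `Z` is the set of nodes not
reachable from `s` in `A'`, and `f` is `1` on arcs incident to `Z` and `2`
otherwise. Then: (1) every `2`-valued arc `uv` with `u ≠ s` has a `2`-valued arc
entering `u`; (2) every `1`-valued arc `uv` with `u ≠ s` either has a `1`-valued
arc entering `u`, or `λ(s,u) ≥ 2`. -/
theorem two_layer_height_function_valid {V : Type*} [Fintype V] [DecidableEq V]
    (A : Finset (V × V)) (s : V) (T : Finset V) (hsT : s ∉ T)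
    (ord : V → ℕ) (hord : ∀ a ∈ A, ord a.1 < ord a.2)
    (hreach : ∀ v : V, Reach A s v)
    (hlamT : ∀ t ∈ T, 1 ≤ lam A s t) :
    let ZU : Finset V := Finset.univ.filter (fun v =>
      ∃ X : Finset V, IsMaxOneSet A s X ∧ (∃ t ∈ T, t ∈ X) ∧ v ∈ X)
    let A' : Finset (V × V) := A.filter (fun a => a.1 ∉ ZU ∧ a.2 ∉ ZU)
    let Z : Finset V := Finset.univ.filter (fun v => ¬ Reach A' s v)
    let f : V × V → ℕ := fun a => if a.1 ∈ Z ∨ a.2 ∈ Z then 1 else 2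
    (∀ a ∈ A, a.1 ≠ s → f a = 2 → ∃ b ∈ A, b.2 = a.1 ∧ f b = 2) ∧
    (∀ a ∈ A, a.1 ≠ s → f a = 1 →
      (∃ b ∈ A, b.2 = a.1 ∧ f b = 1) ∨ 2 ≤ lam A s a.1) :=
  two_layer_height_function_valid_general A s T hreach
end

section
/- Let D=(V,A) be a directed acyclic graph with source s and let f: A → {1,2} be a function such that: for every arc uv with u ≠ s, if f(uv)=2 then some arc wu has f(wu)=2, and if f(uv)=1 then either some arc wu has f(wu)=1 or λ(s,u) ≥ 2. Let c: A → F_q^2 be a linear network code of height 2 on every arc (the second coordinate of c(a) is nonzero for every arc a) with the linear combination property, and define c' by c'(uv) = (1,0) if f(uv)=1 and c'(uv) = c(uv) otherwise. Then c' still satisfies the linear combination property: for every node u ≠ s and every outgoing arc uv, c'(uv) lies in the span of {c'(wu) : wu ∈ A}. -/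
/-!
On an arc `uv` of height 2 the new code keeps `c(uv)`. If some arc into `u` has height 1, the
incoming vectors of `c'` contain `(1,0)` together with (by the predecessor condition) some `c(wu)`
of height 2, so they span `F²`. Otherwise `c'` agrees with `c` on all arcs into `u`: an arc of
height 2 is then covered by the linear combination property of `c`, and one of height 1 by
`λ(s,u) ≥ 2`, which makes the incoming vectors of `c` span `F²`.
-/

theorem span_eq_top_of_mem_of_snd_ne_zero {K : Type*} [Field K] {S : Set (K × K)}
    (h10 : ((1 : K), (0 : K)) ∈ S) {v : K × K} (hv : v ∈ S) (hv2 : v.2 ≠ 0) :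
    Submodule.span K S = ⊤ := by
  refine eq_top_iff.mpr fun z _ => ?_
  have hz : z = (z.1 - z.2 / v.2 * v.1) • ((1 : K), (0 : K)) + (z.2 / v.2) • v := by
    ext <;> simp
    field_simp
  rw [hz]
  exact add_mem (Submodule.smul_mem _ _ (Submodule.subset_span h10))
    (Submodule.smul_mem _ _ (Submodule.subset_span hv))

section InVectors

variable {V M : Type*}

def inVectors (A : Finset (V × V)) (c : V × V → M) (u : V) : Set M :=
  {x | ∃ b ∈ A, b.2 = u ∧ x = c b}

theorem inVectors_congr {A : Finset (V × V)} {c d : V × V → M} {u : V}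
    (h : ∀ b ∈ A, b.2 = u → c b = d b) : inVectors A c u = inVectors A d u := by
  ext x
  constructor <;> rintro ⟨b, hb, rfl, rfl⟩
  exacts [⟨b, hb, rfl, h b hb rfl⟩, ⟨b, hb, rfl, (h b hb rfl).symm⟩]

end InVectors

/-- Key verification step of the two-layer characterization: if `f : A → {1,2}`
satisfies the predecessor conditions, `c` is a linear network code of height `2`
on every arc whose incoming vectors span `F²` at every node `u` with
`λ(s,u) ≥ 2`, and `c'` is obtained by replacing the code by `(1,0)` on every
`1`-valued arc, then `c'` still has the linear combination property. -/
theorem modified_code_linear {V F : Type*} [Field F] [DecidableEq V]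
    (A : Finset (V × V)) (s : V)
    (f : V × V → ℕ) (hfr : ∀ a ∈ A, f a = 1 ∨ f a = 2)
    (hc2 : ∀ a ∈ A, a.1 ≠ s → f a = 2 → ∃ b ∈ A, b.2 = a.1 ∧ f b = 2)
    (hc1 : ∀ a ∈ A, a.1 ≠ s → f a = 1 →
      (∃ b ∈ A, b.2 = a.1 ∧ f b = 1) ∨ 2 ≤ lam A s a.1)
    (c : V × V → F × F)
    (hheight : ∀ a ∈ A, (c a).2 ≠ 0)
    (hlin : ∀ a ∈ A, a.1 ≠ s →
      c a ∈ Submodule.span F {x | ∃ b ∈ A, b.2 = a.1 ∧ x = c b})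
    (hspan : ∀ u : V, 2 ≤ lam A s u →
      Submodule.span F {x | ∃ b ∈ A, b.2 = u ∧ x = c b} = (⊤ : Submodule F (F × F))) :
    ∀ a ∈ A, a.1 ≠ s →
      (if f a = 1 then ((1 : F), (0 : F)) else c a) ∈
        Submodule.span F
          {x | ∃ b ∈ A, b.2 = a.1 ∧ x = (if f b = 1 then ((1 : F), (0 : F)) else c b)} := by
  intro a ha hs
  set c' : V × V → F × F := fun b => if f b = 1 then ((1 : F), (0 : F)) else c b
  change c' a ∈ Submodule.span F (inVectors A c' a.1)
  by_cases hin1 : ∃ b ∈ A, b.2 = a.1 ∧ f b = 1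
  · obtain ⟨b₁, hb₁, hb₁a, hfb₁⟩ := hin1
    have h10 : ((1 : F), (0 : F)) ∈ inVectors A c' a.1 := ⟨b₁, hb₁, hb₁a, (if_pos hfb₁).symm⟩
    rcases hfr a ha with hfa | hfa
    · rw [show c' a = ((1 : F), (0 : F)) from if_pos hfa]
      exact Submodule.subset_span h10
    obtain ⟨b₂, hb₂, hb₂a, hfb₂⟩ := hc2 a ha hs hfa
    have hcb₂ : c b₂ ∈ inVectors A c' a.1 := ⟨b₂, hb₂, hb₂a, (if_neg (by omega)).symm⟩
    rw [span_eq_top_of_mem_of_snd_ne_zero h10 hcb₂ (hheight b₂ hb₂)]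
    exact Submodule.mem_top
  · push Not at hin1
    have hsame : inVectors A c' a.1 = inVectors A c a.1 :=
      inVectors_congr fun b hb hba => if_neg (hin1 b hb hba)
    rw [hsame]
    rcases hfr a ha with hfa | hfa
    · have hlam := (hc1 a ha hs hfa).resolve_left fun ⟨b, hb, hba, hfb⟩ => hin1 b hb hba hfb
      exact (hspan a.1 hlam).symm ▸ Submodule.mem_top
    · rw [show c' a = c a from if_neg (by omega)]
      exact hlin a ha hs
end
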